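/- A compact Boolean topological orthoalgebra is a topological lattice: both ∧ and ∨ are continuous. -/

import Mathlib

/-- An orthoalgebra: a partial commutative, associative operation `oplus`
(defined on the relation `perp`), with unique orthocomplements, in which
`a ⊥ a` forces `a = 0`. -/
structure Orthoalgebra (L : Type*) where
  perp : L → L → Prop
  oplus : L → L → L
  compl : L → L
  zero : L
  one : L
  perp_comm : ∀ a b, perp a b → perp b a
  oplus_comm : ∀ a b, perp a b → oplus a b = oplus b a
  assoc : ∀ a b c, perp b c → perp a (oplus b c) →
    perp a b ∧ perp (oplus a b) c ∧ oplus a (oplus b c) = oplus (oplus a b) c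
  perp_compl : ∀ a, perp a (compl a)
  oplus_compl : ∀ a, oplus a (compl a) = one
  compl_unique : ∀ a b, perp a b → oplus a b = one → b = compl a
  perp_self_eq_zero : ∀ a, perp a a → a = zero
  zero_def : compl one = zero

/-- The induced order: `a ≤ b` iff `a ⊥ b'`. -/
def Orthoalgebra.le {L : Type*} (A : Orthoalgebra L) (a b : L) : Prop :=
  A.perp a (A.compl b)

/-- The partial difference `b ⊖ a = (a ⊕ b')'` (the unique `c` with `b = a ⊕ c` when `a ≤ b`). -/
def Orthoalgebra.ominus {L : Type*} (A : Orthoalgebra L) (b a : L) : L :=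
  A.compl (A.oplus a (A.compl b))

/-- A topological orthoalgebra: `⊥` is closed, `⊕` is continuous on `⊥`,
and `'` is continuous. -/
structure IsTOA {L : Type*} [TopologicalSpace L] (A : Orthoalgebra L) : Prop where
  closed_perp : IsClosed {p : L × L | A.perp p.1 p.2}
  cont_oplus : ContinuousOn (fun p : L × L => A.oplus p.1 p.2) {p : L × L | A.perp p.1 p.2}
  cont_compl : Continuous A.compl

/-- Compatibility: `a` and `b` admit a Mackey decomposition. -/
def Orthoalgebra.Compat {L : Type*} (A : Orthoalgebra L) (a b : L) : Prop :=
  ∃ c, A.le c a ∧ A.le c b ∧ A.perp a (A.ominus b c)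

/-- An atom: a minimal nonzero element. -/
def Orthoalgebra.IsAtom' {L : Type*} (A : Orthoalgebra L) (a : L) : Prop :=
  a ≠ A.zero ∧ ∀ b, A.le b a → b = A.zero ∨ b = a

/-!
In a Boolean orthoalgebra orthogonality is disjointness and `a ⊕ b = a ⊔ b`, so
`b ⊖ c = b ⊓ c'`, and `c` is the middle term of a Mackey decomposition of `(a, b)` exactly when
`c = a ⊓ b`. Thus the graph of `⊓` is the Mackey relation, which is closed in any topological
orthoalgebra because `⊖` is continuous on the closed set `{(b, c) | c ≤ b}`. A map into a
compact space with closed graph is continuous, and `a ⊔ b = (a' ⊓ b')'`.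
-/

theorem continuous_of_isClosed_graph_of_compactSpace {X Y : Type*} [TopologicalSpace X]
    [TopologicalSpace Y] [CompactSpace Y] {f : X → Y}
    (hf : IsClosed {p : X × Y | f p.1 = p.2}) : Continuous f := by
  refine continuous_iff_isClosed.2 fun K hK => ?_
  have hpre : f ⁻¹' K = Prod.fst '' ({p : X × Y | f p.1 = p.2} ∩ Prod.snd ⁻¹' K) := by
    ext x
    constructor
    · exact fun hx => ⟨(x, f x), ⟨rfl, hx⟩, rfl⟩
    · rintro ⟨p, ⟨hp, hpK⟩, rfl⟩
      rwa [Set.mem_preimage, hp]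
  rw [hpre]
  exact isClosedMap_fst_of_compactSpace _ (hf.inter (hK.preimage continuous_snd))

namespace Orthoalgebra

variable {L : Type*} (A : Orthoalgebra L)

/-- `((a, b), c) ∈ A.mackeyRel` iff `(a ⊖ c, c, b ⊖ c)` is a Mackey decomposition of
`(a, b)`. -/
def mackeyRel : Set ((L × L) × L) :=
  {q | A.le q.2 q.1.1 ∧ A.le q.2 q.1.2 ∧ A.perp q.1.1 (A.ominus q.1.2 q.2)}

variable {A}

theorem compl_compl (a : L) : A.compl (A.compl a) = a := by
  have h := A.perp_comm _ _ (A.perp_compl a)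
  refine (A.compl_unique _ _ h ?_).symm
  rw [A.oplus_comm _ _ h, A.oplus_compl]

theorem compl_injective : Function.Injective A.compl := fun a b h => by
  rw [← A.compl_compl a, h, A.compl_compl]

theorem le_oplus_left {a b : L} (h : A.perp a b) : A.le a (A.oplus a b) :=
  A.perp_comm _ _ (A.assoc _ a b h (A.perp_comm _ _ (A.perp_compl _))).1

theorem le_oplus_right {a b : L} (h : A.perp a b) : A.le b (A.oplus a b) := by
  rw [A.oplus_comm a b h]
  exact le_oplus_left (A.perp_comm _ _ h)

theorem ominus_oplus_left {a b : L} (h : A.perp a b) : A.ominus (A.oplus a b) a = b := by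
  set s := A.oplus a b
  have hs : A.perp (A.compl s) s := A.perp_comm _ _ (A.perp_compl s)
  obtain ⟨hsa, hsab, hassoc⟩ := A.assoc (A.compl s) a b h hs
  have hone : A.oplus (A.oplus (A.compl s) a) b = A.one := by
    rw [← hassoc, A.oplus_comm _ _ hs, A.oplus_compl]
  rw [A.compl_unique _ _ hsab hone, A.oplus_comm _ _ hsa]
  rfl

theorem perp_ominus {a c : L} (h : A.le c a) : A.perp c (A.ominus a c) :=
  le_oplus_left h

theorem oplus_ominus {a c : L} (h : A.le c a) : A.oplus c (A.ominus a c) = a := by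
  have h' := congrArg A.compl (ominus_oplus_left h)
  rwa [ominus, A.compl_compl, A.compl_compl] at h'

theorem eq_of_ominus_eq_zero {s t : L} (h : A.le t s) (h0 : A.ominus s t = A.zero) :
    s = t := by
  have hone : A.oplus t (A.compl s) = A.one := by
    rw [← A.zero_def, ominus] at h0
    exact A.compl_injective h0
  exact A.compl_injective (A.compl_unique _ _ h hone)

structure IsBoolean [Lattice L] [BoundedOrder L] (A : Orthoalgebra L) : Prop where
  le_iff : ∀ a b, A.le a b ↔ a ≤ b
  isCompl_compl : ∀ a, IsCompl a (A.compl a)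

namespace IsBoolean

variable [DistribLattice L] [BoundedOrder L] (hB : A.IsBoolean)
include hB

theorem perp_iff_disjoint {a b : L} : A.perp a b ↔ Disjoint a b := by
  rw [← (hB.isCompl_compl b).le_right_iff, ← hB.le_iff, le, compl_compl]

theorem zero_eq_bot : A.zero = ⊥ :=
  (A.perp_self_eq_zero ⊥ (hB.perp_iff_disjoint.2 disjoint_bot_left)).symm

theorem oplus_eq_sup {a b : L} (h : A.perp a b) : A.oplus a b = a ⊔ b := by
  set s := A.oplus a b
  set t := a ⊔ b
  have hts : A.le t s :=
    (hB.le_iff _ _).2 (sup_le ((hB.le_iff _ _).1 (le_oplus_left h))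
      ((hB.le_iff _ _).1 (le_oplus_right h)))
  have hat : A.le a t := (hB.le_iff _ _).2 le_sup_left
  set u := A.ominus t a
  set w := A.ominus s t
  have hwt : A.perp w (A.oplus u a) := by
    rw [← A.oplus_comm _ _ (perp_ominus hat), oplus_ominus hat]
    exact A.perp_comm _ _ (perp_ominus hts)
  obtain ⟨hwu, hwua, hassoc⟩ :=
    A.assoc w u a (A.perp_comm _ _ (perp_ominus hat)) hwt
  -- cancelling `a` from `a ⊕ b = s = a ⊕ (w ⊕ u)` puts `w` below `b`, while `w ⊥ t ≥ b`
  have hs : A.oplus a (A.oplus w u) = s := by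
    rw [A.oplus_comm _ _ (A.perp_comm _ _ hwua), ← hassoc, ← A.oplus_comm _ _ (perp_ominus hat),
      oplus_ominus hat, ← A.oplus_comm _ _ (perp_ominus hts), oplus_ominus hts]
  have hwub : A.oplus w u = b := by
    rw [← ominus_oplus_left (A.perp_comm _ _ hwua), hs, ominus_oplus_left h]
  have hwb : w ≤ b := by
    rw [← hwub]
    exact (hB.le_iff _ _).1 (le_oplus_left hwu)
  have hw : w = ⊥ :=
    (hB.perp_iff_disjoint.1 (A.perp_comm _ _ (perp_ominus hts))).eq_bot_of_le
      (hwb.trans le_sup_right)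
  exact eq_of_ominus_eq_zero hts (hw.trans hB.zero_eq_bot.symm)

theorem ominus_eq_inf_compl {a c : L} (h : c ≤ a) : A.ominus a c = a ⊓ A.compl c := by
  have hc : A.le c a := (hB.le_iff _ _).2 h
  set d := A.ominus a c
  have hdc : d ≤ A.compl c :=
    (hB.isCompl_compl c).le_right_iff.2 (hB.perp_iff_disjoint.1 (perp_ominus hc)).symm
  calc d = (c ⊔ d) ⊓ A.compl c := by
        rw [inf_sup_right, (hB.isCompl_compl c).inf_eq_bot, bot_sup_eq, inf_eq_left.2 hdc]
    _ = a ⊓ A.compl c := by rw [← hB.oplus_eq_sup (perp_ominus hc), oplus_ominus hc]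

theorem mem_mackeyRel_iff {a b c : L} : ((a, b), c) ∈ A.mackeyRel ↔ a ⊓ b = c := by
  change A.le c a ∧ A.le c b ∧ A.perp a (A.ominus b c) ↔ _
  rw [hB.le_iff, hB.le_iff]
  constructor
  · rintro ⟨hca, hcb, hperp⟩
    rw [hB.ominus_eq_inf_compl hcb, hB.perp_iff_disjoint, ← disjoint_assoc,
      ← (hB.isCompl_compl c).le_left_iff] at hperp
    exact le_antisymm hperp (le_inf hca hcb)
  · rintro rfl
    refine ⟨inf_le_left, inf_le_right, ?_⟩
    rw [hB.ominus_eq_inf_compl inf_le_right, hB.perp_iff_disjoint, ← disjoint_assoc,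
      ← (hB.isCompl_compl _).le_left_iff]

theorem sup_eq_compl_inf_compl (a b : L) : a ⊔ b = A.compl (A.compl a ⊓ A.compl b) :=
  ((hB.isCompl_compl a).sup_inf (hB.isCompl_compl b)).left_unique (hB.isCompl_compl _).symm

end IsBoolean

end Orthoalgebra

namespace IsTOA

variable {L : Type*} [TopologicalSpace L] {A : Orthoalgebra L} (hA : IsTOA A)
include hA

theorem isClosed_le : IsClosed {p : L × L | A.le p.1 p.2} :=
  hA.closed_perp.preimage (continuous_fst.prodMk (hA.cont_compl.comp continuous_snd))

theorem continuousOn_ominus :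
    ContinuousOn (fun p : L × L => A.ominus p.1 p.2) {p | A.le p.2 p.1} :=
  hA.cont_compl.comp_continuousOn <| hA.cont_oplus.comp
    (continuous_snd.prodMk (hA.cont_compl.comp continuous_fst)).continuousOn fun _ hp => hp

theorem isClosed_mackeyRel : IsClosed A.mackeyRel := by
  have hle₁ : IsClosed {q : (L × L) × L | A.le q.2 q.1.1} :=
    hA.isClosed_le.preimage (continuous_snd.prodMk (continuous_fst.comp continuous_fst))
  have hle₂ : IsClosed {q : (L × L) × L | A.le q.2 q.1.2} :=
    hA.isClosed_le.preimage (continuous_snd.prodMk (continuous_snd.comp continuous_fst))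
  have hom : ContinuousOn (fun q : (L × L) × L => (q.1.1, A.ominus q.1.2 q.2))
      {q | A.le q.2 q.1.2} :=
    (continuous_fst.comp continuous_fst).continuousOn.prodMk <| hA.continuousOn_ominus.comp
      ((continuous_snd.comp continuous_fst).prodMk continuous_snd).continuousOn fun _ hq => hq
  exact hle₁.inter (hom.preimage_isClosed_of_isClosed hle₂ hA.closed_perp)

end IsTOA

/-- A compact Boolean topological orthoalgebra is a topological lattice. -/
theorem compact_boolean_toa_topological_lattice {L : Type*} [TopologicalSpace L] [CompactSpace L]
    [DistribLattice L] [BoundedOrder L]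
    (A : Orthoalgebra L) (hA : IsTOA A)
    (horder : ∀ a b : L, A.le a b ↔ a ≤ b)
    (hinf : ∀ a : L, a ⊓ A.compl a = ⊥)
    (hsup : ∀ a : L, a ⊔ A.compl a = ⊤) :
    Continuous (fun p : L × L => p.1 ⊓ p.2) ∧ Continuous (fun p : L × L => p.1 ⊔ p.2) := by
  have hB : A.IsBoolean :=
    ⟨horder, fun a => ⟨disjoint_iff.2 (hinf a), codisjoint_iff.2 (hsup a)⟩⟩
  have hgraph : {q : (L × L) × L | q.1.1 ⊓ q.1.2 = q.2} = A.mackeyRel :=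
    Set.ext fun _ => hB.mem_mackeyRel_iff.symm
  have hcont_inf : Continuous (fun p : L × L => p.1 ⊓ p.2) :=
    continuous_of_isClosed_graph_of_compactSpace (hgraph ▸ hA.isClosed_mackeyRel)
  refine ⟨hcont_inf, ?_⟩
  simp_rw [hB.sup_eq_compl_inf_compl]
  exact hA.cont_compl.comp (hcont_inf.comp
    ((hA.cont_compl.comp continuous_fst).prodMk (hA.cont_compl.comp continuous_snd)))
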